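/- Let (Ω, F₂, P) be a probability space with sub-σ-algebras F₀ = {∅, Ω} ⊂ F₁ ⊂ F₂, and suppose F₂ is atomless conditionally to F₁. Let u_{0,2} : L^∞(F₂) → ℝ be a coherent utility function that is relevant, Lebesgue continuous, comonotone additive (u_{0,2}(ξ + η) = u_{0,2}(ξ) + u_{0,2}(η) whenever ξ, η ∈ L^∞(F₂) are comonotone), and time consistent, i.e. u_{0,2} = u_{0,1} ∘ u_{1,2} where u_{1,2} : L^∞(F₂) → L^∞(F₁) is a Lebesgue continuous conditional coherent utility function and u_{0,1} is the restriction of u_{0,2} to L^∞(F₁). Then there exists a probability measure Q on F₁ with Q ~ P such that u_{0,1}(f) = E_Q[f] for all f ∈ L^∞(F₁). -/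

import Mathlib

open MeasureTheory

/-- `F₂` is atomless conditionally to `F₁`: for every `A ∈ F₂` there is `B ∈ F₂`, `B ⊆ A`,
with `0 < E[1_B | F₁] < E[1_A | F₁]` almost surely on the set `{E[1_A | F₁] > 0}`. -/
def CondAtomless {Ω : Type*} (m1 m2 : MeasurableSpace Ω) (μ : @Measure Ω m2) : Prop :=
  ∀ A : Set Ω, MeasurableSet[m2] A →
    ∃ B : Set Ω, MeasurableSet[m2] B ∧ B ⊆ A ∧
      ∀ᵐ ω ∂μ, 0 < (μ[A.indicator (fun _ => (1 : ℝ)) | m1]) ω →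
        0 < (μ[B.indicator (fun _ => (1 : ℝ)) | m1]) ω ∧
        (μ[B.indicator (fun _ => (1 : ℝ)) | m1]) ω <
          (μ[A.indicator (fun _ => (1 : ℝ)) | m1]) ω

/-- A real-valued function is (uniformly) bounded. -/
def Bdd {Ω : Type*} (ξ : Ω → ℝ) : Prop := ∃ C : ℝ, ∀ ω, |ξ ω| ≤ C

/-- A conditional coherent utility function `u : L^∞(F₂) → L^∞(F₁)`:  it maps bounded
`F₂`-measurable functions to bounded `F₁`-measurable ones, `u(0) = 0`, it is monotone
(`ξ ≥ 0 ⇒ u(ξ) ≥ 0`), concave, positively homogeneous with respect to nonnegative bounded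
`F₁`-measurable weights, and `F₁`-translation invariant. -/
structure CondCoherentUtility {Ω : Type*} (m1 m2 : MeasurableSpace Ω) (μ : @MeasureTheory.Measure Ω m2)
    (u : (Ω → ℝ) → Ω → ℝ) : Prop where
  map_zero : u 0 =ᵐ[μ] 0
  measurable_map : ∀ ξ, Measurable[m2] ξ → Bdd ξ → Measurable[m1] (u ξ) ∧ Bdd (u ξ)
  nonneg : ∀ ξ, Measurable[m2] ξ → Bdd ξ → (∀ ω, 0 ≤ ξ ω) → ∀ᵐ ω ∂μ, 0 ≤ u ξ ω
  concave : ∀ ξ η lam, Measurable[m2] ξ → Bdd ξ → Measurable[m2] η → Bdd η →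
    Measurable[m1] lam → (∀ ω, lam ω ∈ Set.Icc (0 : ℝ) 1) →
    ∀ᵐ ω ∂μ, lam ω * u ξ ω + (1 - lam ω) * u η ω ≤
      u (fun ω' => lam ω' * ξ ω' + (1 - lam ω') * η ω') ω
  poshom : ∀ ξ lam, Measurable[m2] ξ → Bdd ξ → Measurable[m1] lam → Bdd lam →
    (∀ ω, 0 ≤ lam ω) →
    u (fun ω' => lam ω' * ξ ω') =ᵐ[μ] fun ω => lam ω * u ξ ω
  transl : ∀ ξ a, Measurable[m2] ξ → Bdd ξ → Measurable[m1] a → Bdd a →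
    u (ξ + a) =ᵐ[μ] u ξ + a

/-- The Lebesgue property: for any uniformly bounded sequence of `F₂`-measurable functions
converging in probability, the utilities converge in probability. -/
def LebesgueProp {Ω : Type*} {m2 : MeasurableSpace Ω} (μ : MeasureTheory.Measure Ω)
    (u : (Ω → ℝ) → Ω → ℝ) : Prop :=
  ∀ (ξ : ℕ → Ω → ℝ) (η : Ω → ℝ), (∀ n, Measurable[m2] (ξ n)) → Measurable[m2] η →
    (∃ C : ℝ, ∀ n ω, |ξ n ω| ≤ C) → Bdd η →
    MeasureTheory.TendstoInMeasure μ ξ Filter.atTop η →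
    MeasureTheory.TendstoInMeasure μ (fun n => u (ξ n)) Filter.atTop (u η)

/-- The Fatou property: for any uniformly bounded sequence of `F₂`-measurable functions
converging in probability to `η`, `u(η) ≥ limsup u(ξ_n)` a.s. -/
def FatouProp {Ω : Type*} {m2 : MeasurableSpace Ω} (μ : MeasureTheory.Measure Ω)
    (u : (Ω → ℝ) → Ω → ℝ) : Prop :=
  ∀ (ξ : ℕ → Ω → ℝ) (η : Ω → ℝ), (∀ n, Measurable[m2] (ξ n)) → Measurable[m2] η →
    (∃ C : ℝ, ∀ n ω, |ξ n ω| ≤ C) → Bdd η →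
    MeasureTheory.TendstoInMeasure μ ξ Filter.atTop η →
    ∀ᵐ ω ∂μ, Filter.limsup (fun n => u (ξ n) ω) Filter.atTop ≤ u η ω

/-- Two real random variables are comonotone if
`(ξ ω − ξ ω') * (η ω − η ω') ≥ 0` for all `ω, ω'`. -/
def Comonotone' {Ω : Type*} (ξ η : Ω → ℝ) : Prop :=
  ∀ ω ω', 0 ≤ (ξ ω - ξ ω') * (η ω - η ω')

/-- A (scalar) coherent utility function on `L^∞(m2)`: `u(0) = 0`, monotone, concave,
positively homogeneous and translation invariant. -/
structure ScalarCoherentUtility {Ω : Type*} (m2 : MeasurableSpace Ω)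
    (v : (Ω → ℝ) → ℝ) : Prop where
  map_zero : v 0 = 0
  nonneg : ∀ ξ, Measurable[m2] ξ → Bdd ξ → (∀ ω, 0 ≤ ξ ω) → 0 ≤ v ξ
  concave : ∀ ξ η, Measurable[m2] ξ → Bdd ξ → Measurable[m2] η → Bdd η →
    ∀ c : ℝ, c ∈ Set.Icc (0 : ℝ) 1 →
      c * v ξ + (1 - c) * v η ≤ v (fun ω => c * ξ ω + (1 - c) * η ω)
  poshom : ∀ ξ, Measurable[m2] ξ → Bdd ξ → ∀ c : ℝ, 0 ≤ c →
    v (fun ω => c * ξ ω) = c * v ξ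
  transl : ∀ ξ, Measurable[m2] ξ → Bdd ξ → ∀ a : ℝ, v (fun ω => ξ ω + a) = v ξ + a

/-- Lebesgue continuity for a scalar utility: uniformly bounded convergence in probability
implies convergence of the utilities. -/
def ScalarLebesgue {Ω : Type*} {m2 : MeasurableSpace Ω} (μ : MeasureTheory.Measure Ω)
    (v : (Ω → ℝ) → ℝ) : Prop :=
  ∀ (ξ : ℕ → Ω → ℝ) (η : Ω → ℝ), (∀ n, Measurable[m2] (ξ n)) → Measurable[m2] η →
    (∃ C : ℝ, ∀ n ω, |ξ n ω| ≤ C) → Bdd η →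
    MeasureTheory.TendstoInMeasure μ ξ Filter.atTop η →
    Filter.Tendsto (fun n => v (ξ n)) Filter.atTop (nhds (v η))

/-- Relevance: `P[A] > 0` implies `v(−1_A) < 0`. -/
def Relevant {Ω : Type*} {m2 : MeasurableSpace Ω} (μ : MeasureTheory.Measure Ω)
    (v : (Ω → ℝ) → ℝ) : Prop :=
  ∀ A : Set Ω, MeasurableSet[m2] A → 0 < μ A →
    v (fun ω => -(A.indicator (fun _ => (1 : ℝ)) ω)) < 0

/-- Comonotone additivity: `v(ξ + η) = v(ξ) + v(η)` for comonotone `ξ, η`. -/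
def ComonotoneAdditive {Ω : Type*} (m2 : MeasurableSpace Ω) (v : (Ω → ℝ) → ℝ) : Prop :=
  ∀ ξ η : Ω → ℝ, Measurable[m2] ξ → Bdd ξ → Measurable[m2] η → Bdd η → Comonotone' ξ η →
    v (ξ + η) = v ξ + v η

/-!
Call a bounded `F₁`-measurable `f` linear for `v` when `v f + v (-f) = 0`; by superadditivity `v`
is then additive along `f`. Once every indicator `1_A`, `A ∈ F₁`, is linear, `Q(A) = v(1_A)` is a
probability measure (countably additive by the Lebesgue property, equivalent to `P` by relevance)
and `v = E_Q` on `L^∞(F₁)` by approximation with simple functions.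

To make `1_A` linear, take `B ∈ F₂` and `γ = u_{1,2}(-1_B)`, and suppose `-1 < γ < 0` on an
`F₁`-set `C ⊇ B`, `γ = 0` off `C`. For `F₁`-measurable `a, b ≥ 0` the variables `a (-1_B)` and
`b (1_C - 1_B)` are comonotone, so comonotone additivity and time consistency give
`v(aγ + b(γ + 1_C)) = v(aγ) + v(b(γ + 1_C))`. Letting `b ↑ -aγ / (1 + γ)` makes the left side
`v 0 = 0`, so `aγ` is linear, and letting `a ↑ 1_{C ∩ C'} / (-γ)` shows that `1_{C ∩ C'}` is linear.
Every `D ∈ F₁` of positive measure contains such a `C` of positive measure: otherwise relevance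
forces `γ ≤ -1` on `D` whenever `B ⊆ D` has positive conditional probability on `D`, while
conditional atomlessness yields such `B` of arbitrarily small measure, against the Lebesgue
property of `u_{1,2}`. An exhaustion argument then covers `Ω` by such sets up to a null set.
-/

open Filter Function Set MeasureTheory Topology

section

variable {Ω : Type*}

theorem abs_indicator_one_le (s : Set Ω) (ω : Ω) : |s.indicator (1 : Ω → ℝ) ω| ≤ 1 := by
  by_cases h : ω ∈ s <;> simp [h]

namespace Bdd

theorem add {f g : Ω → ℝ} (hf : Bdd f) (hg : Bdd g) : Bdd (f + g) := by
  obtain ⟨C, hC⟩ := hf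
  obtain ⟨D, hD⟩ := hg
  exact ⟨C + D, fun ω => (abs_add_le _ _).trans (add_le_add (hC ω) (hD ω))⟩

theorem neg {f : Ω → ℝ} (hf : Bdd f) : Bdd (-f) := by
  obtain ⟨C, hC⟩ := hf
  exact ⟨C, fun ω => (abs_neg (f ω)).trans_le (hC ω)⟩

theorem mul {f g : Ω → ℝ} (hf : Bdd f) (hg : Bdd g) : Bdd (f * g) := by
  obtain ⟨C, hC⟩ := hf
  obtain ⟨D, hD⟩ := hg
  refine ⟨C * D, fun ω => ?_⟩
  rw [Pi.mul_apply, abs_mul]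
  exact mul_le_mul (hC ω) (hD ω) (abs_nonneg _) ((abs_nonneg _).trans (hC ω))

theorem sub {f g : Ω → ℝ} (hf : Bdd f) (hg : Bdd g) : Bdd (f - g) :=
  sub_eq_add_neg f g ▸ hf.add hg.neg

theorem const (c : ℝ) : Bdd (fun _ : Ω => c) := ⟨|c|, fun _ => le_rfl⟩

theorem indicator_one (s : Set Ω) : Bdd (s.indicator 1) := ⟨1, abs_indicator_one_le s⟩

end Bdd

theorem MeasurableSet.measurable_indicator_one {m : MeasurableSpace Ω} {s : Set Ω}
    (hs : MeasurableSet[m] s) : Measurable[m] (s.indicator (1 : Ω → ℝ)) :=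
  measurable_const.indicator hs

theorem indicator_one_nonneg (s : Set Ω) : 0 ≤ s.indicator (1 : Ω → ℝ) :=
  indicator_nonneg fun _ _ => zero_le_one

namespace ScalarCoherentUtility

variable {m : MeasurableSpace Ω} {v : (Ω → ℝ) → ℝ} {ξ η : Ω → ℝ}

theorem map_const (hv : ScalarCoherentUtility m v) (c : ℝ) : v (fun _ => c) = c := by
  simpa [hv.map_zero] using hv.transl 0 measurable_zero (Bdd.const 0) c

theorem add_le (hv : ScalarCoherentUtility m v) (hξ : Measurable[m] ξ) (hξb : Bdd ξ)
    (hη : Measurable[m] η) (hηb : Bdd η) : v ξ + v η ≤ v (ξ + η) := by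
  have hmid := hv.concave ξ η hξ hξb hη hηb (1 / 2) ⟨by norm_num, by norm_num⟩
  have hhalf := hv.poshom (ξ + η) (hξ.add hη) (hξb.add hηb) (1 / 2) (by norm_num)
  have hsum : (fun ω => (1 / 2 : ℝ) * ξ ω + (1 - 1 / 2) * η ω) =
      fun ω => (1 / 2 : ℝ) * (ξ + η) ω := by
    funext ω; simp only [Pi.add_apply]; ring
  rw [hsum, hhalf] at hmid
  linarith

theorem nonneg_indicator_one (hv : ScalarCoherentUtility m v) {s : Set Ω}
    (hs : MeasurableSet[m] s) : 0 ≤ v (s.indicator 1) :=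
  hv.nonneg _ hs.measurable_indicator_one (Bdd.indicator_one s) (indicator_one_nonneg s)

end ScalarCoherentUtility

namespace ScalarLebesgue

variable {m : MeasurableSpace Ω} {μ : @Measure Ω m} [IsFiniteMeasure μ] {v : (Ω → ℝ) → ℝ}

theorem tendsto_of_ae_tendsto (hvLeb : ScalarLebesgue μ v) {ξ : ℕ → Ω → ℝ} {η : Ω → ℝ}
    (hξ : ∀ n, Measurable[m] (ξ n)) (hη : Measurable[m] η) {C : ℝ} (hC : ∀ n ω, |ξ n ω| ≤ C)
    (hηb : Bdd η) (hlim : ∀ᵐ ω ∂μ, Tendsto (fun n => ξ n ω) atTop (𝓝 (η ω))) :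
    Tendsto (fun n => v (ξ n)) atTop (𝓝 (v η)) :=
  hvLeb ξ η hξ hη ⟨C, hC⟩ hηb
    (tendstoInMeasure_of_tendsto_ae (fun n => (hξ n).aestronglyMeasurable) hlim)

theorem congr_ae (hvLeb : ScalarLebesgue μ v) {ξ η : Ω → ℝ} (hξ : Measurable[m] ξ)
    (hξb : Bdd ξ) (hη : Measurable[m] η) (hηb : Bdd η) (h : ξ =ᵐ[μ] η) : v ξ = v η := by
  obtain ⟨C, hC⟩ := hξb
  refine tendsto_nhds_unique tendsto_const_nhds
    (hvLeb.tendsto_of_ae_tendsto (fun _ => hξ) hη (fun _ => hC) hηb ?_)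
  filter_upwards [h] with ω hω
  rw [hω]
  exact tendsto_const_nhds

end ScalarLebesgue

namespace CondCoherentUtility

variable {m1 m2 : MeasurableSpace Ω} {μ : @Measure Ω m2} {u : (Ω → ℝ) → Ω → ℝ}
  {ξ η : Ω → ℝ}

theorem add_le (hu : CondCoherentUtility m1 m2 μ u) (hξ : Measurable[m2] ξ) (hξb : Bdd ξ)
    (hη : Measurable[m2] η) (hηb : Bdd η) : ∀ᵐ ω ∂μ, u ξ ω + u η ω ≤ u (ξ + η) ω := by
  have hmid := hu.concave ξ η (fun _ => 1 / 2) hξ hξb hη hηb measurable_const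
    fun _ => ⟨by norm_num, by norm_num⟩
  have hhalf := hu.poshom (ξ + η) (fun _ => 1 / 2) (hξ.add hη) (hξb.add hηb)
    measurable_const (Bdd.const _) fun _ => by norm_num
  have hsum : (fun ω => (1 / 2 : ℝ) * ξ ω + (1 - 1 / 2) * η ω) =
      fun ω => (1 / 2 : ℝ) * (ξ + η) ω := by
    funext ω; simp only [Pi.add_apply]; ring
  rw [hsum] at hmid
  filter_upwards [hmid, hhalf] with ω hmidω hhalfω
  rw [hhalfω] at hmidω
  linarith

theorem mul_ae (hu : CondCoherentUtility m1 m2 μ u) (hξ : Measurable[m2] ξ) (hξb : Bdd ξ)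
    {a : Ω → ℝ} (ha : Measurable[m1] a) (hab : Bdd a) (ha0 : 0 ≤ a) :
    u (a * ξ) =ᵐ[μ] a * u ξ :=
  hu.poshom ξ a hξ hξb ha hab ha0

theorem mul_add_ae (hm : m1 ≤ m2) (hu : CondCoherentUtility m1 m2 μ u) (hξ : Measurable[m2] ξ)
    (hξb : Bdd ξ) {a c : Ω → ℝ} (ha : Measurable[m1] a) (hab : Bdd a) (ha0 : 0 ≤ a)
    (hc : Measurable[m1] c) (hcb : Bdd c) : u (a * ξ + c) =ᵐ[μ] a * u ξ + c := by
  filter_upwards [hu.transl (a * ξ) c ((ha.mono hm le_rfl).mul hξ) (hab.mul hξb) hc hcb,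
    hu.mul_ae hξ hξb ha hab ha0] with ω htransl hmul
  rw [htransl, Pi.add_apply, hmul, Pi.add_apply]

theorem mono (hu : CondCoherentUtility m1 m2 μ u) (hξ : Measurable[m2] ξ) (hξb : Bdd ξ)
    (hη : Measurable[m2] η) (hηb : Bdd η) (hle : ξ ≤ η) : ∀ᵐ ω ∂μ, u ξ ω ≤ u η ω := by
  have hsplit := hu.add_le hξ hξb (hη.sub hξ) (hηb.sub hξb)
  have hnonneg := hu.nonneg _ (hη.sub hξ) (hηb.sub hξb) fun ω => sub_nonneg.2 (hle ω)
  rw [add_sub_cancel] at hsplit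
  filter_upwards [hsplit, hnonneg] with ω h1 h2
  linarith

theorem ae_nonpos (hu : CondCoherentUtility m1 m2 μ u) (hξ : Measurable[m2] ξ) (hξb : Bdd ξ)
    (hle : ξ ≤ 0) : ∀ᵐ ω ∂μ, u ξ ω ≤ 0 := by
  filter_upwards [hu.mono hξ hξb measurable_zero (Bdd.const 0) hle, hu.map_zero] with ω h h0
  rwa [h0] at h

end CondCoherentUtility

/-- For `v = inf_Q E_Q[·]` this says that all the `Q` give `f` the same expectation. -/
def MemLinearitySpace (m : MeasurableSpace Ω) (v : (Ω → ℝ) → ℝ) (f : Ω → ℝ) : Prop :=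
  Measurable[m] f ∧ Bdd f ∧ v f + v (-f) = 0

namespace MemLinearitySpace

variable {m1 m2 : MeasurableSpace Ω} {v : (Ω → ℝ) → ℝ} {f g : Ω → ℝ}

theorem neg (hf : MemLinearitySpace m1 v f) : MemLinearitySpace m1 v (-f) :=
  ⟨hf.1.neg, hf.2.1.neg, by rw [neg_neg, add_comm]; exact hf.2.2⟩

theorem map_add (hm : m1 ≤ m2) (hv : ScalarCoherentUtility m2 v)
    (hf : MemLinearitySpace m1 v f) (hg : Measurable[m2] g) (hgb : Bdd g) :
    v (f + g) = v f + v g := by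
  have hf2 : Measurable[m2] f := hf.1.mono hm le_rfl
  have hle := hv.add_le hf2 hf.2.1 hg hgb
  have hge := hv.add_le (hf2.add hg) (hf.2.1.add hgb) hf2.neg hf.2.1.neg
  rw [add_neg_cancel_comm] at hge
  linarith [hf.2.2]

theorem add (hm : m1 ≤ m2) (hv : ScalarCoherentUtility m2 v)
    (hf : MemLinearitySpace m1 v f) (hg : MemLinearitySpace m1 v g) :
    MemLinearitySpace m1 v (f + g) := by
  refine ⟨hf.1.add hg.1, hf.2.1.add hg.2.1, ?_⟩
  rw [neg_add, hf.map_add hm hv (hg.1.mono hm le_rfl) hg.2.1,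
    hf.neg.map_add hm hv (hg.1.neg.mono hm le_rfl) hg.2.1.neg]
  linarith [hf.2.2, hg.2.2]

theorem map_const_mul (hm : m1 ≤ m2) (hv : ScalarCoherentUtility m2 v)
    (hf : MemLinearitySpace m1 v f) (c : ℝ) : v (fun ω => c * f ω) = c * v f := by
  have hf2 : Measurable[m2] f := hf.1.mono hm le_rfl
  rcases le_or_gt 0 c with hc | hc
  · exact hv.poshom f hf2 hf.2.1 c hc
  · have hflip : (fun ω => c * f ω) = fun ω => -c * (-f) ω := by
      funext ω; simp only [Pi.neg_apply]; ring
    rw [hflip, hv.poshom (-f) hf2.neg hf.2.1.neg (-c) (by linarith),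
      eq_neg_of_add_eq_zero_right hf.2.2]
    ring

theorem const_mul (hm : m1 ≤ m2) (hv : ScalarCoherentUtility m2 v)
    (hf : MemLinearitySpace m1 v f) (c : ℝ) : MemLinearitySpace m1 v (fun ω => c * f ω) := by
  refine ⟨measurable_const.mul hf.1, (Bdd.const c).mul hf.2.1, ?_⟩
  have hneg : -(fun ω => c * f ω) = fun ω => -c * f ω := by
    funext ω; simp only [Pi.neg_apply]; ring
  rw [hneg, hf.map_const_mul hm hv, hf.map_const_mul hm hv]
  ring

theorem of_tendsto {μ : @Measure Ω m2} [IsFiniteMeasure μ] (hm : m1 ≤ m2)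
    (hvLeb : ScalarLebesgue μ v) {f : ℕ → Ω → ℝ} (hf : ∀ n, MemLinearitySpace m1 v (f n))
    {C : ℝ} (hC : ∀ n ω, |f n ω| ≤ C) (hg : Measurable[m1] g) (hgb : Bdd g)
    (hlim : ∀ᵐ ω ∂μ, Tendsto (fun n => f n ω) atTop (𝓝 (g ω))) : MemLinearitySpace m1 v g := by
  have hf2 : ∀ n, Measurable[m2] (f n) := fun n => (hf n).1.mono hm le_rfl
  have hg2 : Measurable[m2] g := hg.mono hm le_rfl
  have hpos := hvLeb.tendsto_of_ae_tendsto hf2 hg2 hC hgb hlim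
  have hneg := hvLeb.tendsto_of_ae_tendsto (fun n => (hf2 n).neg) hg2.neg
    (fun n ω => (abs_neg (f n ω)).trans_le (hC n ω)) hgb.neg
    (hlim.mono fun ω hω => hω.neg)
  refine ⟨hg, hgb, tendsto_nhds_unique (hpos.add hneg) ?_⟩
  simp only [fun n => (hf n).2.2]
  exact tendsto_const_nhds

theorem of_map_add_tendsto {μ : @Measure Ω m2} [IsFiniteMeasure μ] (hm : m1 ≤ m2)
    (hv : ScalarCoherentUtility m2 v) (hvLeb : ScalarLebesgue μ v) (hf : Measurable[m1] f)
    (hfb : Bdd f) {G : ℕ → Ω → ℝ} (hG : ∀ n, Measurable[m2] (G n)) {C : ℝ}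
    (hGb : ∀ n ω, |G n ω| ≤ C) (hlim : ∀ᵐ ω ∂μ, Tendsto (fun n => G n ω) atTop (𝓝 (-f ω)))
    (hadd : ∀ n, v (f + G n) = v f + v (G n)) : MemLinearitySpace m1 v f := by
  have hf2 : Measurable[m2] f := hf.mono hm le_rfl
  have hlimG := hvLeb.tendsto_of_ae_tendsto hG hf2.neg hGb hfb.neg hlim
  obtain ⟨Cf, hCf⟩ := hfb
  have hlimSum := hvLeb.tendsto_of_ae_tendsto (fun n => hf2.add (hG n)) measurable_const
    (fun n ω => (abs_add_le _ _).trans (add_le_add (hCf ω) (hGb n ω))) (Bdd.const 0)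
    (hlim.mono fun ω hω => by simpa using hω.const_add (f ω))
  simp only [hadd, hv.map_const] at hlimSum
  exact ⟨hf, ⟨Cf, hCf⟩, tendsto_nhds_unique (tendsto_const_nhds.add hlimG) hlimSum⟩

theorem congr_ae {μ : @Measure Ω m2} [IsFiniteMeasure μ] (hm : m1 ≤ m2)
    (hvLeb : ScalarLebesgue μ v) (hf : MemLinearitySpace m1 v f) (hg : Measurable[m1] g)
    (hgb : Bdd g) (hfg : f =ᵐ[μ] g) : MemLinearitySpace m1 v g := by
  obtain ⟨C, hC⟩ := hf.2.1
  exact of_tendsto hm hvLeb (fun _ => hf) (fun _ => hC) hg hgb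
    (hfg.mono fun ω hω => by rw [hω]; exact tendsto_const_nhds)

end MemLinearitySpace

def IsLinearitySet (m : MeasurableSpace Ω) (v : (Ω → ℝ) → ℝ) (C : Set Ω) : Prop :=
  MeasurableSet[m] C ∧ ∀ C', MeasurableSet[m] C' → MemLinearitySpace m v ((C ∩ C').indicator 1)

namespace IsLinearitySet

variable {m1 m2 : MeasurableSpace Ω} {v : (Ω → ℝ) → ℝ}

theorem empty (hv : ScalarCoherentUtility m2 v) : IsLinearitySet m1 v ∅ := by
  refine ⟨@MeasurableSet.empty _ m1, fun C' _ => ?_⟩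
  rw [empty_inter, indicator_empty']
  exact ⟨measurable_const, Bdd.const 0, by rw [neg_zero, hv.map_zero, add_zero]⟩

theorem union (hm : m1 ≤ m2) (hv : ScalarCoherentUtility m2 v) {C₁ C₂ : Set Ω}
    (h₁ : IsLinearitySet m1 v C₁) (h₂ : IsLinearitySet m1 v C₂) :
    IsLinearitySet m1 v (C₁ ∪ C₂) := by
  refine ⟨h₁.1.union h₂.1, fun C' hC' => ?_⟩
  have hsplit : ((C₁ ∪ C₂) ∩ C').indicator (1 : Ω → ℝ) =
      (C₁ ∩ C').indicator 1 + (C₂ ∩ (C' \ C₁)).indicator 1 := by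
    ext ω
    by_cases h₁ : ω ∈ C₁ <;> by_cases h₂ : ω ∈ C₂ <;> by_cases h' : ω ∈ C' <;>
      simp [h₁, h₂, h']
  rw [hsplit]
  exact (h₁.2 C' hC').add hm hv (h₂.2 _ (hC'.diff h₁.1))

theorem iUnion {μ : @Measure Ω m2} [IsFiniteMeasure μ] (hm : m1 ≤ m2)
    (hv : ScalarCoherentUtility m2 v) (hvLeb : ScalarLebesgue μ v) {C : ℕ → Set Ω}
    (hC : ∀ n, IsLinearitySet m1 v (C n)) : IsLinearitySet m1 v (⋃ n, C n) := by
  have hacc : ∀ n, IsLinearitySet m1 v (accumulate C n) := by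
    intro n
    induction n with
    | zero => simpa using hC 0
    | succ n ih => simpa using ih.union hm hv (hC (n + 1))
  have hU : MeasurableSet[m1] (⋃ n, C n) := .iUnion fun n => (hC n).1
  refine ⟨hU, fun C' hC' => ?_⟩
  have hmono : Monotone fun n => accumulate C n ∩ C' :=
    fun _ _ hle => inter_subset_inter_left _ (monotone_accumulate hle)
  have hlim : ∀ ω, Tendsto (fun n => (accumulate C n ∩ C').indicator (1 : Ω → ℝ) ω) atTop
      (𝓝 (((⋃ n, C n) ∩ C').indicator 1 ω)) := by
    intro ω
    rw [← iUnion_accumulate, iUnion_inter]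
    exact (hmono.tendsto_indicator _ _ ω).mono_right (pure_le_nhds _)
  exact MemLinearitySpace.of_tendsto (μ := μ) hm hvLeb (fun n => (hacc n).2 C' hC')
    (fun n => abs_indicator_one_le _) (hU.inter hC').measurable_indicator_one
    (Bdd.indicator_one _) (ae_of_all _ hlim)

end IsLinearitySet

theorem MeasureTheory.exists_measure_compl_eq_zero_of_iUnion {m : MeasurableSpace Ω}
    (μ : Measure Ω) [IsFiniteMeasure μ] {P : Set Ω → Prop}
    (hP : ∀ s, P s → MeasurableSet s) (hempty : P ∅) (hunion : ∀ s t, P s → P t → P (s ∪ t))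
    (hiUnion : ∀ s : ℕ → Set Ω, (∀ n, P (s n)) → P (⋃ n, s n))
    (hexists : ∀ D, MeasurableSet D → μ D ≠ 0 → ∃ C ⊆ D, P C ∧ μ C ≠ 0) :
    ∃ C, P C ∧ μ Cᶜ = 0 := by
  set S := μ '' {C | P C}
  obtain ⟨u, -, hu, huS⟩ :=
    exists_seq_tendsto_sSup (⟨μ ∅, ∅, hempty, rfl⟩ : S.Nonempty) (OrderTop.bddAbove S)
  choose C hC hCu using huS
  have hPU := hiUnion C hC
  have hμU : μ (⋃ n, C n) = sSup S := by
    refine le_antisymm (le_sSup ⟨_, hPU, rfl⟩) (le_of_tendsto' hu fun n => ?_)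
    rw [← hCu n]
    exact measure_mono (subset_iUnion C n)
  refine ⟨⋃ n, C n, hPU, of_not_not fun hne => ?_⟩
  obtain ⟨C', hC'sub, hC', hC'ne⟩ := hexists _ (hP _ hPU).compl hne
  have hgt : μ (⋃ n, C n) < μ ((⋃ n, C n) ∪ C') := by
    rw [measure_union (disjoint_compl_right.mono_right hC'sub) (hP _ hC')]
    exact ENNReal.lt_add_right (measure_ne_top μ _) hC'ne
  exact hgt.not_ge (hμU ▸ le_sSup ⟨_, hunion _ _ hPU hC', rfl⟩)

theorem comonotone_of_nonpos_of_nonneg {ξ η : Ω → ℝ} (hξ : ξ ≤ 0) (hη : 0 ≤ η)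
    (hdisj : ∀ ω, ξ ω = 0 ∨ η ω = 0) : Comonotone' ξ η := by
  intro ω ω'
  rcases hdisj ω with h | h <;> rcases hdisj ω' with h' | h' <;> simp only [h, h'] <;>
    nlinarith [hξ ω, hξ ω', hη ω, hη ω']

theorem min_div_mul_le {p q : ℝ} (hp : 0 ≤ p) (hq : 0 ≤ q) (n : ℝ) : min (p / q) n * q ≤ p := by
  rcases hq.eq_or_lt with rfl | hq
  · simpa using hp
  · exact (mul_le_mul_of_nonneg_right (min_le_left _ _) hq.le).trans_eq (div_mul_cancel₀ p hq.ne')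

theorem tendsto_min_div_mul {p q : ℝ} (hpq : 0 < q ∨ p = 0) :
    Tendsto (fun n : ℕ => min (p / q) n * q) atTop (𝓝 p) := by
  rcases hpq with hq | rfl
  · refine tendsto_const_nhds.congr' ?_
    filter_upwards [eventually_ge_atTop ⌈p / q⌉₊] with n hn
    rw [min_eq_left ((Nat.le_ceil _).trans (Nat.cast_le.2 hn)), div_mul_cancel₀ p hq.ne']
  · simp

theorem exists_bdd_mul_tendsto {m : MeasurableSpace Ω} {p q : Ω → ℝ} (hp : Measurable[m] p)
    (hq : Measurable[m] q) (hp0 : 0 ≤ p) (hq0 : 0 ≤ q) (hpq : ∀ ω, 0 < q ω ∨ p ω = 0) :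
    ∃ s : ℕ → Ω → ℝ, (∀ n, Measurable[m] (s n) ∧ Bdd (s n) ∧ 0 ≤ s n) ∧
      (∀ n ω, |(s n * q) ω| ≤ p ω) ∧ ∀ ω, Tendsto (fun n => (s n * q) ω) atTop (𝓝 (p ω)) := by
  have hs0 : ∀ (n : ℕ) ω, 0 ≤ min (p ω / q ω) n := fun n ω =>
    le_min (div_nonneg (hp0 ω) (hq0 ω)) n.cast_nonneg
  refine ⟨fun n ω => min (p ω / q ω) n, fun n => ⟨(hp.div hq).min measurable_const,
    ⟨n, fun ω => abs_le.2 ⟨(neg_nonpos.2 n.cast_nonneg).trans (hs0 n ω), min_le_right _ _⟩⟩,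
    hs0 n⟩, fun n ω => ?_, fun ω => tendsto_min_div_mul (hpq ω)⟩
  rw [Pi.mul_apply, abs_of_nonneg (mul_nonneg (hs0 n ω) (hq0 ω))]
  exact min_div_mul_le (hp0 ω) (hq0 ω) n

section TimeConsistency

variable {m1 m2 : MeasurableSpace Ω} {μ : @Measure Ω m2} [IsFiniteMeasure μ]
  {v : (Ω → ℝ) → ℝ} {u : (Ω → ℝ) → Ω → ℝ}

theorem eq_of_condUtility_ae_eq (hm : m1 ≤ m2) (hvLeb : ScalarLebesgue μ v)
    (hu : CondCoherentUtility m1 m2 μ u) (hTC : ∀ ξ, Measurable[m2] ξ → Bdd ξ → v ξ = v (u ξ))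
    {ξ g : Ω → ℝ} (hξ : Measurable[m2] ξ) (hξb : Bdd ξ) (hg : Measurable[m2] g) (hgb : Bdd g)
    (h : u ξ =ᵐ[μ] g) : v ξ = v g :=
  (hTC ξ hξ hξb).trans <| hvLeb.congr_ae ((hu.measurable_map ξ hξ hξb).1.mono hm le_rfl)
    (hu.measurable_map ξ hξ hξb).2 hg hgb h

theorem comonotone_mul_neg_indicator {a b : Ω → ℝ} (ha : 0 ≤ a) (hb : 0 ≤ b) {B C : Set Ω}
    (hBC : B ⊆ C) : Comonotone' (a * -B.indicator 1) (b * -B.indicator 1 + b * C.indicator 1) := by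
  refine comonotone_of_nonpos_of_nonneg (fun ω => ?_) (fun ω => ?_) (fun ω => ?_)
  · simpa using mul_nonneg (ha ω) (indicator_one_nonneg B ω)
  · by_cases hωB : ω ∈ B
    · simp [hωB, hBC hωB]
    · simpa [hωB] using mul_nonneg (hb ω) (indicator_one_nonneg C ω)
  · by_cases hωB : ω ∈ B
    · simp [hωB, hBC hωB]
    · simp [hωB]

theorem map_add_of_condUtility_indicator (hm : m1 ≤ m2) (hvLeb : ScalarLebesgue μ v)
    (hcomon : ComonotoneAdditive m2 v) (hu : CondCoherentUtility m1 m2 μ u)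
    (hTC : ∀ ξ, Measurable[m2] ξ → Bdd ξ → v ξ = v (u ξ)) {B C : Set Ω} (hB : MeasurableSet[m2] B)
    (hC : MeasurableSet[m1] C) (hBC : B ⊆ C) {γ : Ω → ℝ} (hγ : Measurable[m1] γ) (hγb : Bdd γ)
    (hγu : u (-B.indicator 1) =ᵐ[μ] γ) {a b : Ω → ℝ} (ha : Measurable[m1] a) (hab : Bdd a)
    (ha0 : 0 ≤ a) (hb : Measurable[m1] b) (hbb : Bdd b) (hb0 : 0 ≤ b) :
    v (a * γ + b * (γ + C.indicator 1)) = v (a * γ) + v (b * (γ + C.indicator 1)) := by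
  have hBm : Measurable[m2] (-B.indicator (1 : Ω → ℝ)) := hB.measurable_indicator_one.neg
  have hBb : Bdd (-B.indicator (1 : Ω → ℝ)) := (Bdd.indicator_one B).neg
  have hlift : ∀ {a c : Ω → ℝ}, Measurable[m1] a → Bdd a → 0 ≤ a → Measurable[m1] c → Bdd c →
      v (a * -B.indicator 1 + c) = v (a * γ + c) := by
    intro a c ha hab ha0 hc hcb
    refine eq_of_condUtility_ae_eq hm hvLeb hu hTC (((ha.mono hm le_rfl).mul hBm).add
      (hc.mono hm le_rfl)) ((hab.mul hBb).add hcb) (((ha.mul hγ).add hc).mono hm le_rfl)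
      ((hab.mul hγb).add hcb) ?_
    filter_upwards [hu.mul_add_ae hm hBm hBb ha hab ha0 hc hcb, hγu] with ω h hγω
    rw [h, Pi.add_apply, Pi.mul_apply, hγω, Pi.add_apply, Pi.mul_apply]
  have hCm : Measurable[m1] (C.indicator (1 : Ω → ℝ)) := hC.measurable_indicator_one
  have hCb := Bdd.indicator_one C
  have hξ : v (a * -B.indicator 1) = v (a * γ) := by
    simpa using hlift (c := 0) ha hab ha0 measurable_const (Bdd.const 0)
  have hadd := hcomon _ _ ((ha.mono hm le_rfl).mul hBm) (hab.mul hBb)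
    (((hb.mono hm le_rfl).mul hBm).add ((hb.mul hCm).mono hm le_rfl))
    ((hbb.mul hBb).add (hbb.mul hCb)) (comonotone_mul_neg_indicator ha0 hb0 hBC)
  calc v (a * γ + b * (γ + C.indicator 1)) = v ((a + b) * γ + b * C.indicator 1) := by
        congr 1; ring
    _ = v ((a + b) * -B.indicator 1 + b * C.indicator 1) :=
        (hlift (ha.add hb) (hab.add hbb) (add_nonneg ha0 hb0) (hb.mul hCm) (hbb.mul hCb)).symm
    _ = v (a * -B.indicator 1 + (b * -B.indicator 1 + b * C.indicator 1)) := by congr 1; ring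
    _ = v (a * γ) + v (b * (γ + C.indicator 1)) := by
        rw [hadd, hξ, hlift hb hbb hb0 (hb.mul hCm) (hbb.mul hCb), mul_add]

theorem memLinearitySpace_mul_of_strict (hm : m1 ≤ m2) (hv : ScalarCoherentUtility m2 v)
    (hvLeb : ScalarLebesgue μ v) (hcomon : ComonotoneAdditive m2 v)
    (hu : CondCoherentUtility m1 m2 μ u) (hTC : ∀ ξ, Measurable[m2] ξ → Bdd ξ → v ξ = v (u ξ))
    {B C : Set Ω} (hB : MeasurableSet[m2] B)
    (hC : MeasurableSet[m1] C) (hBC : B ⊆ C) {γ : Ω → ℝ} (hγ : Measurable[m1] γ)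
    (hγu : u (-B.indicator 1) =ᵐ[μ] γ) (hγC : ∀ ω ∈ C, γ ω ∈ Ioo (-1) 0)
    (hγCc : ∀ ω ∉ C, γ ω = 0) {a : Ω → ℝ} (ha : Measurable[m1] a) (hab : Bdd a)
    (ha0 : 0 ≤ a) : MemLinearitySpace m1 v (a * γ) := by
  have hγb : Bdd γ := ⟨1, fun ω => by
    by_cases hω : ω ∈ C
    · exact abs_le.2 ⟨(hγC ω hω).1.le, (hγC ω hω).2.le.trans zero_le_one⟩
    · simp [hγCc ω hω]⟩
  have hpq : ∀ ω, 0 ≤ (-(a * γ)) ω ∧ 0 ≤ (γ + C.indicator 1 : Ω → ℝ) ω ∧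
      (0 < (γ + C.indicator 1 : Ω → ℝ) ω ∨ (-(a * γ)) ω = 0) := by
    intro ω
    by_cases hω : ω ∈ C
    · have := hγC ω hω
      simp only [Pi.neg_apply, Pi.mul_apply, Pi.add_apply, indicator_of_mem hω, Pi.one_apply]
      exact ⟨neg_nonneg.2 (mul_nonpos_of_nonneg_of_nonpos (ha0 ω) this.2.le), by linarith [this.1],
        Or.inl (by linarith [this.1])⟩
    · simp [hγCc ω hω, hω]
  have hq : Measurable[m1] (γ + C.indicator 1) := hγ.add hC.measurable_indicator_one
  obtain ⟨s, hs, hsb, hslim⟩ := exists_bdd_mul_tendsto (ha.mul hγ).neg hq (fun ω => (hpq ω).1)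
    (fun ω => (hpq ω).2.1) fun ω => (hpq ω).2.2
  obtain ⟨M, hM⟩ := (hab.mul hγb).neg
  exact MemLinearitySpace.of_map_add_tendsto hm hv hvLeb (ha.mul hγ) (hab.mul hγb)
    (fun n => ((hs n).1.mul hq).mono hm le_rfl)
    (fun n ω => (hsb n ω).trans ((le_abs_self _).trans (hM ω))) (ae_of_all _ hslim) fun n =>
    map_add_of_condUtility_indicator hm hvLeb hcomon hu hTC hB hC hBC hγ hγb hγu ha hab ha0
      (hs n).1 (hs n).2.1 (hs n).2.2

theorem isLinearitySet_of_strict (hm : m1 ≤ m2) (hv : ScalarCoherentUtility m2 v)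
    (hvLeb : ScalarLebesgue μ v) (hcomon : ComonotoneAdditive m2 v)
    (hu : CondCoherentUtility m1 m2 μ u) (hTC : ∀ ξ, Measurable[m2] ξ → Bdd ξ → v ξ = v (u ξ))
    {B C : Set Ω} (hB : MeasurableSet[m2] B) (hC : MeasurableSet[m1] C) (hBC : B ⊆ C)
    {γ : Ω → ℝ} (hγ : Measurable[m1] γ) (hγu : u (-B.indicator 1) =ᵐ[μ] γ)
    (hγC : ∀ ω ∈ C, γ ω ∈ Ioo (-1) 0) (hγCc : ∀ ω ∉ C, γ ω = 0) : IsLinearitySet m1 v C := by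
  refine ⟨hC, fun C' hC' => ?_⟩
  have hCC' : MeasurableSet[m1] (C ∩ C') := hC.inter hC'
  have hpq : ∀ ω, 0 ≤ (C ∩ C').indicator (1 : Ω → ℝ) ω ∧ 0 ≤ (-γ) ω ∧
      (0 < (-γ) ω ∨ (C ∩ C').indicator (1 : Ω → ℝ) ω = 0) := by
    intro ω
    by_cases hω : ω ∈ C
    · have := (hγC ω hω).2
      exact ⟨indicator_one_nonneg _ ω, by simp; linarith,
        Or.inl (by simp; linarith)⟩
    · simp [hγCc ω hω, hω]
  obtain ⟨s, hs, hsb, hslim⟩ := exists_bdd_mul_tendsto hCC'.measurable_indicator_one hγ.neg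
    (fun ω => (hpq ω).1) (fun ω => (hpq ω).2.1) fun ω => (hpq ω).2.2
  refine MemLinearitySpace.of_tendsto hm hvLeb (fun n => ?_)
    (fun n ω => (hsb n ω).trans ((le_abs_self _).trans (abs_indicator_one_le _ ω)))
    hCC'.measurable_indicator_one (Bdd.indicator_one _) (ae_of_all _ hslim)
  rw [mul_neg]
  exact (memLinearitySpace_mul_of_strict hm hv hvLeb hcomon hu hTC hB hC hBC hγ hγu hγC hγCc
    (hs n).1 (hs n).2.1 (hs n).2.2).neg

end TimeConsistency

theorem MeasureTheory.measure_inter_ne_zero_of_condExp_pos {m m0 : MeasurableSpace Ω}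
    {μ : @Measure Ω m0} [IsFiniteMeasure μ] {B s : Set Ω} (hB : MeasurableSet[m0] B)
    (hs : MeasurableSet[m] s) (hpos : ∀ᵐ ω ∂μ, ω ∈ s → 0 < μ[B.indicator (1 : Ω → ℝ) | m] ω)
    (hμs : μ s ≠ 0) : μ (B ∩ s) ≠ 0 := by
  intro hμBs
  have hnull : s.indicator (B.indicator (1 : Ω → ℝ)) =ᵐ[μ] 0 := by
    rw [indicator_indicator, inter_comm]
    filter_upwards [measure_eq_zero_iff_ae_notMem.1 hμBs] with ω hω
    exact indicator_of_notMem hω 1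
  have hcond : s.indicator (μ[B.indicator (1 : Ω → ℝ) | m]) =ᵐ[μ] 0 :=
    (condExp_indicator ((integrable_const (1 : ℝ)).indicator hB) hs).symm.trans
      ((condExp_congr_ae hnull).trans (by rw [condExp_zero]))
  refine hμs (measure_eq_zero_iff_ae_notMem.2 ?_)
  filter_upwards [hpos, hcond] with ω hposω hcondω hω
  rw [Pi.zero_apply, indicator_of_mem hω] at hcondω
  exact (hposω hω).ne' hcondω

theorem MeasureTheory.tendstoInMeasure_zero_of_eq_zero_off {m : MeasurableSpace Ω}
    {μ : Measure Ω} {ι : Type*} {l : Filter ι} {f : ι → Ω → ℝ} {s : ι → Set Ω}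
    (hf : ∀ i, ∀ ω ∉ s i, f i ω = 0) (hs : Tendsto (fun i => μ (s i)) l (𝓝 0)) :
    TendstoInMeasure μ f l 0 := by
  intro ε hε
  refine tendsto_of_tendsto_of_tendsto_of_le_of_le tendsto_const_nhds hs (fun _ => zero_le)
    fun i => measure_mono fun ω hω => of_not_not fun hωs => ?_
  simp [hf i ω hωs] at hω
  exact hε.ne' hω

namespace CondAtomless

variable {m1 m2 : MeasurableSpace Ω} {μ : @Measure Ω m2} [IsFiniteMeasure μ]

/-- One of the two pieces `B'`, `B \ B'` given by conditional atomlessness has at most half the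
mass of `B`. -/
theorem exists_subset_measure_le_half (hca : CondAtomless m1 m2 μ)
    {B D : Set Ω} (hB : MeasurableSet[m2] B)
    (hpos : ∀ᵐ ω ∂μ, ω ∈ D → 0 < μ[B.indicator (1 : Ω → ℝ) | m1] ω) :
    ∃ B' ⊆ B, MeasurableSet[m2] B' ∧ (∀ᵐ ω ∂μ, ω ∈ D → 0 < μ[B'.indicator (1 : Ω → ℝ) | m1] ω) ∧
      μ B' ≤ μ B / 2 := by
  obtain ⟨B', hB', hB'B, hsplit⟩ := hca B hB
  have hint : ∀ {s : Set Ω}, MeasurableSet[m2] s → Integrable (s.indicator (1 : Ω → ℝ)) μ :=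
    fun hs => (integrable_const (1 : ℝ)).indicator hs
  have hdiff : μ[(B \ B').indicator (1 : Ω → ℝ) | m1] =ᵐ[μ]
      μ[B.indicator (1 : Ω → ℝ) | m1] - μ[B'.indicator (1 : Ω → ℝ) | m1] := by
    rw [indicator_sdiff hB'B]
    exact condExp_sub (hint hB) (hint hB') m1
  have hbounds : ∀ᵐ ω ∂μ, ω ∈ D →
      0 < μ[B'.indicator (1 : Ω → ℝ) | m1] ω ∧ 0 < μ[(B \ B').indicator (1 : Ω → ℝ) | m1] ω := by
    filter_upwards [hpos, hsplit, hdiff] with ω hposω hsplitω hdiffω hω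
    have h := hsplitω (hposω hω)
    rw [hdiffω, Pi.sub_apply]
    exact ⟨h.1, sub_pos.2 h.2⟩
  have hμB : μ B' + μ (B \ B') = μ B := (measure_add_sdiff hB'.nullMeasurableSet B).trans
    (by rw [union_eq_self_of_subset_left hB'B])
  by_cases hhalf : μ B' ≤ μ B / 2
  · exact ⟨B', hB'B, hB', hbounds.mono fun ω h hω => (h hω).1, hhalf⟩
  · refine ⟨B \ B', sdiff_subset, hB.diff hB', hbounds.mono fun ω h hω => (h hω).2, ?_⟩
    by_contra hgt
    have := ENNReal.add_lt_add (not_le.1 hhalf) (not_le.1 hgt)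
    rw [ENNReal.add_halves, hμB] at this
    exact this.false

theorem exists_subset_measure_le_pow (hm : m1 ≤ m2) (hca : CondAtomless m1 m2 μ)
    {D : Set Ω} (hD : MeasurableSet[m1] D) (n : ℕ) :
    ∃ B ⊆ D, MeasurableSet[m2] B ∧ (∀ᵐ ω ∂μ, ω ∈ D → 0 < μ[B.indicator (1 : Ω → ℝ) | m1] ω) ∧
      μ B ≤ μ D * 2⁻¹ ^ n := by
  induction n with
  | zero =>
    have hD1 : μ[D.indicator (1 : Ω → ℝ) | m1] = D.indicator 1 :=
      condExp_of_stronglyMeasurable hm hD.measurable_indicator_one.stronglyMeasurable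
        ((integrable_const (1 : ℝ)).indicator (hm _ hD))
    refine ⟨D, subset_rfl, hm _ hD, ae_of_all _ fun ω hω => ?_, by simp⟩
    rw [hD1, indicator_of_mem hω]
    exact zero_lt_one
  | succ n ih =>
    obtain ⟨B, hBD, hB, hpos, hμB⟩ := ih
    obtain ⟨B', hB'B, hB', hpos', hμB'⟩ := exists_subset_measure_le_half hca hB hpos
    refine ⟨B', hB'B.trans hBD, hB', hpos', hμB'.trans ?_⟩
    rw [pow_succ, ← mul_assoc, ← div_eq_mul_inv]
    exact ENNReal.div_le_div_right hμB 2

end CondAtomless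

theorem CondCoherentUtility.neg_indicator_inter_ae {m1 m2 : MeasurableSpace Ω}
    {μ : @Measure Ω m2} {u : (Ω → ℝ) → Ω → ℝ} (hu : CondCoherentUtility m1 m2 μ u)
    {B C : Set Ω} (hB : MeasurableSet[m2] B) (hC : MeasurableSet[m1] C) :
    u (-(B ∩ C).indicator 1) =ᵐ[μ] C.indicator 1 * u (-B.indicator 1) := by
  have hsplit : -(B ∩ C).indicator (1 : Ω → ℝ) = C.indicator 1 * -B.indicator 1 := by
    rw [inter_indicator_one]
    ring
  rw [hsplit]
  exact hu.mul_ae hB.measurable_indicator_one.neg (Bdd.indicator_one B).neg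
    hC.measurable_indicator_one (Bdd.indicator_one C) (indicator_one_nonneg C)

section Atomless

variable {m1 m2 : MeasurableSpace Ω} {μ : @Measure Ω m2} [IsFiniteMeasure μ]
  {v : (Ω → ℝ) → ℝ} {u : (Ω → ℝ) → Ω → ℝ}

/-- On the part `L` of `D` where `u(-1_B) > -1` it vanishes, so
`v(-1_{B ∩ L}) = v(u(-1_{B ∩ L})) = 0`, and relevance forces `μ L = 0`. -/
theorem ae_condUtility_le_neg_one (hm : m1 ≤ m2) (hv : ScalarCoherentUtility m2 v)
    (hrel : Relevant μ v) (hvLeb : ScalarLebesgue μ v) (hu : CondCoherentUtility m1 m2 μ u)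
    (hTC : ∀ ξ, Measurable[m2] ξ → Bdd ξ → v ξ = v (u ξ)) {B D : Set Ω}
    (hB : MeasurableSet[m2] B) (hD : MeasurableSet[m1] D)
    (hpos : ∀ᵐ ω ∂μ, ω ∈ D → 0 < μ[B.indicator (1 : Ω → ℝ) | m1] ω)
    (hnot : μ (D ∩ u (-B.indicator 1) ⁻¹' Ioo (-1) 0) = 0) :
    ∀ᵐ ω ∂μ, ω ∈ D → u (-B.indicator 1) ω ≤ -1 := by
  have hBm : Measurable[m2] (-B.indicator (1 : Ω → ℝ)) := hB.measurable_indicator_one.neg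
  set L := D ∩ u (-B.indicator 1) ⁻¹' Ioi (-1)
  have hL : MeasurableSet[m1] L :=
    hD.inter ((hu.measurable_map _ hBm (Bdd.indicator_one B).neg).1 measurableSet_Ioi)
  suffices hL0 : μ L = 0 by
    filter_upwards [measure_eq_zero_iff_ae_notMem.1 hL0] with ω hω hωD
    exact not_lt.1 fun h => hω ⟨hωD, h⟩
  by_contra hL0
  have hμBL := measure_inter_ne_zero_of_condExp_pos hB hL (hpos.mono fun ω h hω => h hω.1) hL0
  have hBL : MeasurableSet[m2] (B ∩ L) := hB.inter (hm _ hL)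
  have hzero : u (-(B ∩ L).indicator 1) =ᵐ[μ] 0 := by
    filter_upwards [hu.neg_indicator_inter_ae hB hL, hu.ae_nonpos hBm (Bdd.indicator_one B).neg
      (fun ω => neg_nonpos.2 (indicator_one_nonneg _ ω)),
      measure_eq_zero_iff_ae_notMem.1 hnot] with ω h hle hnotω
    rw [h, Pi.mul_apply]
    by_cases hω : ω ∈ L
    · rw [indicator_of_mem hω, Pi.one_apply, one_mul, Pi.zero_apply]
      exact le_antisymm hle (not_lt.1 fun hlt => hnotω ⟨hω.1, hω.2, hlt⟩)
    · simp [hω]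
  have hv0 := eq_of_condUtility_ae_eq hm hvLeb hu hTC hBL.measurable_indicator_one.neg
    (Bdd.indicator_one _).neg measurable_const (Bdd.const 0) hzero
  exact (hrel _ hBL (pos_iff_ne_zero.2 hμBL)).ne (hv0.trans hv.map_zero)

theorem exists_measure_condUtility_mem_Ioo_ne_zero (hm : m1 ≤ m2) (hca : CondAtomless m1 m2 μ)
    (hv : ScalarCoherentUtility m2 v) (hrel : Relevant μ v) (hvLeb : ScalarLebesgue μ v)
    (hu : CondCoherentUtility m1 m2 μ u) (huLeb : LebesgueProp μ u)
    (hTC : ∀ ξ, Measurable[m2] ξ → Bdd ξ → v ξ = v (u ξ)) {D : Set Ω}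
    (hD : MeasurableSet[m1] D) (hμD : μ D ≠ 0) :
    ∃ B ⊆ D, MeasurableSet[m2] B ∧ μ (D ∩ u (-B.indicator 1) ⁻¹' Ioo (-1) 0) ≠ 0 := by
  by_contra! hnone
  choose B hBD hB hpos hμB using CondAtomless.exists_subset_measure_le_pow hm hca hD
  have hle : ∀ n, ∀ᵐ ω ∂μ, ω ∈ D → u (-(B n).indicator 1) ω ≤ -1 := fun n =>
    ae_condUtility_le_neg_one hm hv hrel hvLeb hu hTC (hB n) hD (hpos n)
      (hnone _ (hBD n) (hB n))
  have hμB0 : Tendsto (fun n => μ (B n)) atTop (𝓝 0) := by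
    have := ENNReal.Tendsto.const_mul
      (ENNReal.tendsto_pow_atTop_nhds_zero_of_lt_one (r := 2⁻¹) (by norm_num))
      (Or.inr (measure_ne_top μ D))
    rw [mul_zero] at this
    exact tendsto_of_tendsto_of_tendsto_of_le_of_le tendsto_const_nhds this (fun _ => zero_le)
      hμB
  have hconv : TendstoInMeasure μ (fun n => -(B n).indicator (1 : Ω → ℝ)) atTop 0 :=
    tendstoInMeasure_zero_of_eq_zero_off (fun n ω hω => by simp [hω]) hμB0
  have huconv := huLeb _ 0 (fun n => (hB n).measurable_indicator_one.neg) measurable_const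
    ⟨1, fun n ω => (abs_neg _).trans_le (abs_indicator_one_le _ ω)⟩ (Bdd.const 0) hconv 1 one_pos
  have hD_le : ∀ n, μ D ≤ μ {ω | 1 ≤ edist (u (-(B n).indicator 1) ω) (u 0 ω)} := by
    intro n
    refine measure_mono_ae ?_
    filter_upwards [hle n, hu.map_zero] with ω hleω h0 hωD
    change 1 ≤ edist _ _
    rw [h0, Pi.zero_apply, edist_dist, Real.dist_eq, sub_zero]
    exact ENNReal.one_le_ofReal.2 (le_abs.2 (Or.inr (le_neg.1 (hleω hωD))))
  exact hμD (le_antisymm (ge_of_tendsto' huconv hD_le) zero_le)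

end Atomless

section Linearity

variable {m1 m2 : MeasurableSpace Ω} {μ : @Measure Ω m2} [IsFiniteMeasure μ]
  {v : (Ω → ℝ) → ℝ} {u : (Ω → ℝ) → Ω → ℝ}

theorem exists_isLinearitySet_subset (hm : m1 ≤ m2) (hca : CondAtomless m1 m2 μ)
    (hv : ScalarCoherentUtility m2 v) (hrel : Relevant μ v) (hvLeb : ScalarLebesgue μ v)
    (hcomon : ComonotoneAdditive m2 v) (hu : CondCoherentUtility m1 m2 μ u)
    (huLeb : LebesgueProp μ u) (hTC : ∀ ξ, Measurable[m2] ξ → Bdd ξ → v ξ = v (u ξ))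
    {D : Set Ω} (hD : MeasurableSet[m1] D) (hμD : μ D ≠ 0) :
    ∃ C ⊆ D, IsLinearitySet m1 v C ∧ μ C ≠ 0 := by
  obtain ⟨B, -, hB, hμC⟩ :=
    exists_measure_condUtility_mem_Ioo_ne_zero hm hca hv hrel hvLeb hu huLeb hTC hD hμD
  have hγ : Measurable[m1] (u (-B.indicator 1)) :=
    (hu.measurable_map _ hB.measurable_indicator_one.neg (Bdd.indicator_one B).neg).1
  set C := D ∩ u (-B.indicator 1) ⁻¹' Ioo (-1) 0
  have hC : MeasurableSet[m1] C := hD.inter (hγ measurableSet_Ioo)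
  refine ⟨C, inter_subset_left, isLinearitySet_of_strict hm hv hvLeb hcomon hu hTC
    (hB.inter (hm _ hC)) hC inter_subset_right (γ := C.indicator 1 * u (-B.indicator 1))
    (hC.measurable_indicator_one.mul hγ)
    (hu.neg_indicator_inter_ae hB hC) (fun ω hω => ?_) (fun ω hω => ?_), hμC⟩
  · rw [Pi.mul_apply, indicator_of_mem hω, Pi.one_apply, one_mul]
    exact hω.2
  · simp [hω]

theorem memLinearitySpace_indicator (hm : m1 ≤ m2) (hca : CondAtomless m1 m2 μ)
    (hv : ScalarCoherentUtility m2 v) (hrel : Relevant μ v) (hvLeb : ScalarLebesgue μ v)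
    (hcomon : ComonotoneAdditive m2 v) (hu : CondCoherentUtility m1 m2 μ u)
    (huLeb : LebesgueProp μ u) (hTC : ∀ ξ, Measurable[m2] ξ → Bdd ξ → v ξ = v (u ξ))
    {A : Set Ω} (hA : MeasurableSet[m1] A) : MemLinearitySpace m1 v (A.indicator 1) := by
  obtain ⟨C, hC, hCc⟩ := exists_measure_compl_eq_zero_of_iUnion (μ.trim hm)
    (P := IsLinearitySet m1 v) (fun _ h => h.1) (IsLinearitySet.empty hv)
    (fun _ _ h₁ h₂ => h₁.union hm hv h₂) (fun _ h => IsLinearitySet.iUnion hm hv hvLeb h)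
    fun D hD hμD => by
      rw [trim_measurableSet_eq hm hD] at hμD
      obtain ⟨C, hCD, hC, hμC⟩ :=
        exists_isLinearitySet_subset hm hca hv hrel hvLeb hcomon hu huLeb hTC hD hμD
      exact ⟨C, hCD, hC, by rwa [trim_measurableSet_eq hm hC.1]⟩
  rw [trim_measurableSet_eq hm hC.1.compl] at hCc
  refine (hC.2 A hA).congr_ae hm hvLeb hA.measurable_indicator_one (Bdd.indicator_one A) ?_
  filter_upwards [measure_eq_zero_iff_ae_notMem.1 hCc] with ω hω
  rw [notMem_compl_iff] at hω
  by_cases hωA : ω ∈ A <;> simp [hω, hωA]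

end Linearity

theorem Measurable.bdd_induction {m : MeasurableSpace Ω} {P : (Ω → ℝ) → Prop}
    (hind : ∀ (c : ℝ) {s : Set Ω}, MeasurableSet s → P (s.indicator fun _ => c))
    (hadd : ∀ {f g : Ω → ℝ}, Measurable f → Measurable g → P f → P g → P (f + g))
    (hlim : ∀ {f : ℕ → Ω → ℝ} {g : Ω → ℝ} {C : ℝ}, (∀ n, Measurable (f n)) → (∀ n, P (f n)) →
      (∀ n ω, |f n ω| ≤ C) → Measurable g → Bdd g →
      (∀ ω, Tendsto (fun n => f n ω) atTop (𝓝 (g ω))) → P g)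
    {f : Ω → ℝ} (hf : Measurable f) (hfb : Bdd f) : P f := by
  classical
  have hsimple : ∀ φ : SimpleFunc Ω ℝ, P φ := by
    intro φ
    induction φ using SimpleFunc.induction with
    | const c hs =>
      rw [SimpleFunc.coe_piecewise, SimpleFunc.coe_const, SimpleFunc.coe_const,
        Function.const_zero, piecewise_eq_indicator]
      exact hind c hs
    | add _ hφ hψ => exact hadd (SimpleFunc.measurable _) (SimpleFunc.measurable _) hφ hψ
  obtain ⟨C, hC⟩ := hfb
  refine hlim (f := fun n => SimpleFunc.approxOn f hf univ 0 (mem_univ 0) n) (C := C + C)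
    (fun n => SimpleFunc.measurable _) (fun n => hsimple _) (fun n ω => ?_) hf ⟨C, hC⟩
    fun ω => SimpleFunc.tendsto_approxOn hf (mem_univ 0) (by simp)
  have := SimpleFunc.norm_approxOn_zero_le hf (mem_univ 0) ω n
  simp only [Real.norm_eq_abs] at this
  linarith [hC ω]

section Representation

variable {m1 m2 : MeasurableSpace Ω} {μ : @Measure Ω m2} [IsFiniteMeasure μ]
  {v : (Ω → ℝ) → ℝ}

theorem hasSum_utility_indicator (hm : m1 ≤ m2) (hv : ScalarCoherentUtility m2 v)
    (hvLeb : ScalarLebesgue μ v)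
    (hlin : ∀ A, MeasurableSet[m1] A → MemLinearitySpace m1 v (A.indicator 1))
    {g : ℕ → Set Ω} (hg : ∀ i, MeasurableSet[m1] (g i)) (hdisj : Pairwise (Disjoint on g)) :
    HasSum (fun i => v ((g i).indicator 1)) (v ((⋃ i, g i).indicator 1)) := by
  have hacc : ∀ n, MeasurableSet[m1] (accumulate g n) := fun n =>
    .biUnion (to_countable _) fun i _ => hg i
  have hpartial : ∀ n, v ((accumulate g n).indicator 1) =
      ∑ i ∈ Finset.range (n + 1), v ((g i).indicator 1) := by
    intro n
    induction n with
    | zero => simp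
    | succ n ih =>
      rw [accumulate_succ, indicator_union_of_disjoint (disjoint_accumulate hdisj n.lt_succ_self),
        Finset.sum_range_succ, ← ih]
      exact (hlin _ (hacc n)).map_add hm hv (hm _ (hg _)).measurable_indicator_one
        (Bdd.indicator_one _)
  have hlim : Tendsto (fun n => v ((accumulate g n).indicator 1)) atTop
      (𝓝 (v ((⋃ i, g i).indicator 1))) := by
    refine hvLeb.tendsto_of_ae_tendsto (fun n => (hm _ (hacc n)).measurable_indicator_one)
      (hm _ (.iUnion hg)).measurable_indicator_one (fun n => abs_indicator_one_le _)
      (Bdd.indicator_one _) (ae_of_all _ fun ω => ?_)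
    rw [← iUnion_accumulate]
    exact (monotone_accumulate.tendsto_indicator _ _ ω).mono_right (pure_le_nhds _)
  refine (hasSum_iff_tendsto_nat_of_nonneg (fun i => hv.nonneg_indicator_one (hm _ (hg i))) _).2
    ((tendsto_add_atTop_iff_nat 1).1 ?_)
  simpa only [← hpartial] using hlim

theorem exists_measure_eq_utility_indicator (hm : m1 ≤ m2)
    (hv : ScalarCoherentUtility m2 v) (hvLeb : ScalarLebesgue μ v)
    (hlin : ∀ A, MeasurableSet[m1] A → MemLinearitySpace m1 v (A.indicator 1)) :
    ∃ Q : @Measure Ω m1, ∀ s, MeasurableSet[m1] s → Q s = ENNReal.ofReal (v (s.indicator 1)) := by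
  refine ⟨@Measure.ofMeasurable Ω m1 (fun s _ => ENNReal.ofReal (v (s.indicator 1)))
    (by simp [hv.map_const]) fun g hg hdisj => ?_, fun s hs => ?_⟩
  · have hsum := hasSum_utility_indicator hm hv hvLeb hlin hg hdisj
    rw [← hsum.tsum_eq, ENNReal.ofReal_tsum_of_nonneg
      (fun i => hv.nonneg_indicator_one (hm _ (hg i))) hsum.summable]
  · exact @Measure.ofMeasurable_apply Ω m1 _ _ _ s hs

theorem utility_eq_integral (hm : m1 ≤ m2) (hv : ScalarCoherentUtility m2 v)
    (hvLeb : ScalarLebesgue μ v)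
    (hlin : ∀ A, MeasurableSet[m1] A → MemLinearitySpace m1 v (A.indicator 1))
    {Q : @Measure Ω m1} [IsFiniteMeasure Q]
    (hQ : ∀ s, MeasurableSet[m1] s → Q.real s = v (s.indicator 1)) {f : Ω → ℝ}
    (hf : Measurable[m1] f) (hfb : Bdd f) : v f = ∫ ω, f ω ∂Q := by
  have hint : ∀ {g : Ω → ℝ}, MemLinearitySpace m1 v g → Integrable g Q := fun {g} hg => by
    obtain ⟨C, hC⟩ := hg.2.1
    exact (integrable_const C).mono' hg.1.aestronglyMeasurable (ae_of_all _ hC)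
  refine (Measurable.bdd_induction (m := m1)
    (P := fun g => MemLinearitySpace m1 v g ∧ v g = ∫ ω, g ω ∂Q) ?_ ?_ ?_ hf hfb).2
  · intro c s hs
    have hcs : (s.indicator fun _ => c) = fun ω => c * s.indicator 1 ω := by
      ext ω; by_cases hω : ω ∈ s <;> simp [hω]
    rw [integral_indicator_const c hs, smul_eq_mul, hQ s hs, hcs]
    exact ⟨(hlin s hs).const_mul hm hv c, ((hlin s hs).map_const_mul hm hv c).trans (mul_comm _ _)⟩
  · rintro f g - - ⟨hfl, hfv⟩ ⟨hgl, hgv⟩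
    refine ⟨hfl.add hm hv hgl, ?_⟩
    rw [hfl.map_add hm hv (hgl.1.mono hm le_rfl) hgl.2.1, hfv, hgv]
    exact (integral_add (hint hfl) (hint hgl)).symm
  · rintro f g C - hfP hC hg hgb hlim
    have hgl := MemLinearitySpace.of_tendsto hm hvLeb (fun n => (hfP n).1) hC hg hgb
      (ae_of_all _ hlim)
    refine ⟨hgl, tendsto_nhds_unique (hvLeb.tendsto_of_ae_tendsto
      (fun n => (hfP n).1.1.mono hm le_rfl) (hg.mono hm le_rfl) hC hgb (ae_of_all _ hlim)) ?_⟩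
    simp only [fun n => (hfP n).2]
    exact tendsto_integral_of_dominated_convergence (fun _ => C)
      (fun n => (hfP n).1.1.aestronglyMeasurable) (integrable_const C)
      (fun n => ae_of_all _ (hC n)) (ae_of_all _ hlim)

theorem utility_indicator_pos_iff (hm : m1 ≤ m2) (hv : ScalarCoherentUtility m2 v)
    (hrel : Relevant μ v) (hvLeb : ScalarLebesgue μ v)
    (hlin : ∀ A, MeasurableSet[m1] A → MemLinearitySpace m1 v (A.indicator 1))
    {s : Set Ω} (hs : MeasurableSet[m1] s) : 0 < v (s.indicator 1) ↔ μ s ≠ 0 := by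
  refine ⟨fun hpos hμ => hpos.ne' ?_, fun hμ => ?_⟩
  · have hnull : s.indicator (1 : Ω → ℝ) =ᵐ[μ] 0 := by
      filter_upwards [measure_eq_zero_iff_ae_notMem.1 hμ] with ω hω
      exact indicator_of_notMem hω 1
    rw [hvLeb.congr_ae (hm _ hs).measurable_indicator_one (Bdd.indicator_one s)
      measurable_const (Bdd.const 0) hnull, hv.map_const]
  · have hneg : v (-s.indicator 1) < 0 := hrel s (hm _ hs) (pos_iff_ne_zero.2 hμ)
    linarith [(hlin s hs).2.2]

end Representation

end

/-- If `F₂` is atomless conditionally to `F₁` and `u_{0,2}` is a coherent, relevant,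
Lebesgue continuous, comonotone additive and time consistent utility function
(`u_{0,2} = u_{0,1} ∘ u_{1,2}` with `u_{1,2}` a Lebesgue continuous conditional coherent
utility and `u_{0,1}` the restriction of `u_{0,2}` to `L^∞(F₁)`), then there is a
probability measure `Q ∼ P` on `F₁` with `u_{0,1}(f) = E_Q[f]` for all `f ∈ L^∞(F₁)`. -/
theorem stmt_13 {Ω : Type*} {m1 m2 : MeasurableSpace Ω} (hm : m1 ≤ m2)
    (μ : @Measure Ω m2) [IsProbabilityMeasure μ]
    (hca : CondAtomless m1 m2 μ)
    (v : (Ω → ℝ) → ℝ) (hv : ScalarCoherentUtility m2 v)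
    (hrel : Relevant μ v) (hvLeb : ScalarLebesgue μ v)
    (hcomon : ComonotoneAdditive m2 v)
    (u12 : (Ω → ℝ) → Ω → ℝ) (hu12 : CondCoherentUtility m1 m2 μ u12)
    (hu12Leb : LebesgueProp μ u12)
    (hTC : ∀ ξ, Measurable[m2] ξ → Bdd ξ → v ξ = v (u12 ξ)) :
    ∃ Q : @Measure Ω m1, IsProbabilityMeasure Q ∧
      Q ≪ μ.trim hm ∧ μ.trim hm ≪ Q ∧
      ∀ f : Ω → ℝ, Measurable[m1] f → Bdd f → v f = ∫ ω, f ω ∂Q := by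
  have hlin : ∀ A, MeasurableSet[m1] A → MemLinearitySpace m1 v (A.indicator 1) := fun _ hA =>
    memLinearitySpace_indicator hm hca hv hrel hvLeb hcomon hu12 hu12Leb hTC hA
  obtain ⟨Q, hQ⟩ := exists_measure_eq_utility_indicator hm hv hvLeb hlin
  have hQnull : ∀ s, MeasurableSet[m1] s → (Q s = 0 ↔ μ.trim hm s = 0) := fun s hs => by
    rw [hQ s hs, trim_measurableSet_eq hm hs, ENNReal.ofReal_eq_zero, ← not_lt,
      utility_indicator_pos_iff hm hv hrel hvLeb hlin hs, not_not]
  have hQprob : IsProbabilityMeasure Q := ⟨by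
    rw [hQ _ (@MeasurableSet.univ _ m1), indicator_univ]
    exact ENNReal.ofReal_eq_one.2 (hv.map_const 1)⟩
  refine ⟨Q, hQprob, .mk fun s hs h => (hQnull s hs).2 h, .mk fun s hs h => (hQnull s hs).1 h,
    fun f hf hfb => utility_eq_integral hm hv hvLeb hlin (fun s hs => ?_) hf hfb⟩
  rw [measureReal_def, hQ s hs, ENNReal.toReal_ofReal (hv.nonneg_indicator_one (hm _ hs))]
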